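/- arXiv:1506.06945 — 2 statements merged into one kernel-verified Lean document; each statement's English description precedes it below -/
import Mathlib

section
/- Let A ∈ GLₙ(ℤ) be a hyperbolic matrix (no complex eigenvalue of modulus 1), and let f = f_A be the induced hyperbolic toral automorphism. Every continuous map τ : Tⁿ → Tⁿ commuting with f that is surjective is pre-injective: if x, y ∈ Tⁿ are f-homoclinic and τ(x) = τ(y), then x = y. (Assume the Walters theorem that τ is affine: τ(x̄) = (Bx + c) + ℤⁿ for some B ∈ Mₙ(ℤ), c ∈ ℝⁿ.) -/
open Filter Topology

def homoclinic {X : Type*} [MetricSpace X] (f : X ≃ₜ X) (x y : X) : Prop :=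
  Filter.Tendsto (fun k : ℤ => dist ((f.toEquiv ^ k) x) ((f.toEquiv ^ k) y))
    Filter.cofinite (nhds 0)

abbrev Torus (n : ℕ) : Type := Fin n → AddCircle (1 : ℝ)

noncomputable def torusProj (n : ℕ) (x : Fin n → ℝ) : Torus n :=
  fun i => (x i : AddCircle (1 : ℝ))

/-! If `τ p = τ q`, the linear part `B` of the affine map `τ` kills `p - q`, so multiplying by the
adjugate of `B` shows that `p - q` is `det B`-torsion, and `det B ≠ 0` because `τ` is onto. As `f`
is a group automorphism, `fᵏ p - fᵏ q = fᵏ (p - q)` is again `det B`-torsion. A nonzero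
`d`-torsion point of the torus has norm at least `1 / |d|`, so once `fᵏ p` and `fᵏ q` are closer
than that, `fᵏ (p - q) = 0`, hence `p = q`. -/

open Matrix

theorem AddCircle.eq_zero_of_zsmul_eq_zero_of_norm_lt {p : ℝ} [Fact (0 < p)] {u : AddCircle p}
    {d : ℤ} (hd : d ≠ 0) (hdu : d • u = 0) (hu : ‖u‖ < p / |d|) : u = 0 := by
  by_contra hu0
  have hdvd : (addOrderOf u : ℤ) ∣ d := addOrderOf_dvd_iff_zsmul_eq_zero.mpr hdu
  have hfin : IsOfFinAddOrder u := by
    refine addOrderOf_pos_iff.mp (Nat.pos_of_ne_zero fun h => hd ?_)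
    simpa [h] using hdvd
  have hord : (addOrderOf u : ℝ) ≤ |d| := by
    exact_mod_cast Int.le_of_dvd (abs_pos.mpr hd) ((dvd_abs _ _).mpr hdvd)
  have hdpos : (0 : ℝ) < |d| := by positivity
  have hle := le_add_order_smul_norm_of_isOfFinAddOrder hfin hu0
  rw [nsmul_eq_mul] at hle
  rw [lt_div_iff₀ hdpos] at hu
  nlinarith [norm_nonneg u]

theorem Pi.eq_zero_of_zsmul_eq_zero_of_norm_lt {ι : Type*} [Fintype ι] {p : ℝ} [Fact (0 < p)]
    {t : ι → AddCircle p} {d : ℤ} (hd : d ≠ 0) (hdt : d • t = 0) (ht : ‖t‖ < p / |d|) :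
    t = 0 :=
  funext fun i => AddCircle.eq_zero_of_zsmul_eq_zero_of_norm_lt hd (congrFun hdt i)
    ((norm_le_pi_norm t i).trans_lt ht)

theorem Equiv.Perm.exists_addEquiv_coe_zpow {G : Type*} [AddGroup G] (σ : Equiv.Perm G)
    (hσ : ∀ a b, σ (a + b) = σ a + σ b) (k : ℤ) : ∃ e : G ≃+ G, ⇑(σ ^ k) = ⇑e := by
  refine ⟨k • AddEquiv.mk' σ hσ, ?_⟩
  have h := congrArg Additive.toMul (map_zsmul (AddAut.toPerm G) k (AddEquiv.mk' σ hσ))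
  rw [toMul_zsmul] at h
  exact (congrArg DFunLike.coe h).symm

theorem eq_of_homoclinic_of_zsmul_sub_eq_zero {ι : Type*} [Fintype ι] {p : ℝ} [Fact (0 < p)]
    (f : (ι → AddCircle p) ≃ₜ (ι → AddCircle p)) (hf : ∀ a b, f (a + b) = f a + f b)
    {x y : ι → AddCircle p} (hxy : homoclinic f x y) {d : ℤ} (hd : d ≠ 0)
    (hdxy : d • (x - y) = 0) : x = y := by
  have hε : (0 : ℝ) < p / |d| := div_pos Fact.out (by exact_mod_cast abs_pos.mpr hd)
  obtain ⟨k, hk⟩ := (hxy.eventually (gt_mem_nhds hε)).exists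
  obtain ⟨e, he⟩ := Equiv.Perm.exists_addEquiv_coe_zpow f.toEquiv hf k
  rw [he, dist_eq_norm, ← map_sub] at hk
  have h0 : e (x - y) = 0 :=
    Pi.eq_zero_of_zsmul_eq_zero_of_norm_lt hd (by rw [← map_zsmul, hdxy, map_zero]) hk
  exact sub_eq_zero.mp ((map_eq_zero_iff e e.injective).mp h0)

theorem torusProj_surjective (n : ℕ) : Function.Surjective (torusProj n) := fun t =>
  ⟨fun i => (t i).out, funext fun i => QuotientAddGroup.out_eq' (t i)⟩

theorem torusProj_add {n : ℕ} (x y : Fin n → ℝ) :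
    torusProj n (x + y) = torusProj n x + torusProj n y :=
  rfl

namespace Matrix

variable {n : ℕ}

def torusEndo (M : Matrix (Fin n) (Fin n) ℤ) : Torus n →+ Torus n :=
  AddMonoidHom.mk' (fun t i => ∑ j, M i j • t j) fun s t => by
    funext i
    simp [smul_add, Finset.sum_add_distrib]

theorem torusEndo_apply (M : Matrix (Fin n) (Fin n) ℤ) (t : Torus n) (i : Fin n) :
    torusEndo M t i = ∑ j, M i j • t j :=
  rfl

theorem torusEndo_torusProj (M : Matrix (Fin n) (Fin n) ℤ) (x : Fin n → ℝ) :
    torusEndo M (torusProj n x) = torusProj n (M.map (Int.cast : ℤ → ℝ) *ᵥ x) := by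
  funext i
  simp [torusEndo_apply, torusProj, mulVec, dotProduct]

theorem torusEndo_mul_apply (M N : Matrix (Fin n) (Fin n) ℤ) (t : Torus n) :
    torusEndo (M * N) t = torusEndo M (torusEndo N t) := by
  obtain ⟨x, rfl⟩ := torusProj_surjective n t
  have hcast : (M * N).map (Int.cast : ℤ → ℝ) = M.map Int.cast * N.map Int.cast :=
    Matrix.map_mul (f := Int.castRingHom ℝ)
  simp only [torusEndo_torusProj, mulVec_mulVec, hcast]

theorem torusEndo_smul_one (d : ℤ) (t : Torus n) :
    torusEndo (d • (1 : Matrix (Fin n) (Fin n) ℤ)) t = d • t := by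
  funext i
  simp only [torusEndo_apply, smul_apply, one_apply, smul_eq_mul, mul_ite, mul_one, mul_zero,
    ite_smul, zero_smul, Finset.sum_ite_eq, Finset.mem_univ, if_true, Pi.smul_apply]

theorem torusEndo_adjugate_apply (M : Matrix (Fin n) (Fin n) ℤ) (t : Torus n) :
    torusEndo M.adjugate (torusEndo M t) = M.det • t := by
  rw [← torusEndo_mul_apply, adjugate_mul, torusEndo_smul_one]

theorem det_ne_zero_of_surjective_torusEndo {M : Matrix (Fin n) (Fin n) ℤ}
    (hM : Function.Surjective (torusEndo M)) : M.det ≠ 0 := by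
  intro hdet
  obtain ⟨u, hu0, huM⟩ := exists_vecMul_eq_zero_iff.mpr hdet
  obtain ⟨j, hj⟩ : ∃ j, u j ≠ 0 := Function.ne_iff.mp hu0
  -- `t ↦ ∑ i, u i • t i` is a character of the torus that vanishes on the image of `M`.
  have hχ : ∀ t : Torus n, ∑ i, u i • torusEndo M t i = 0 := fun t => by
    simp only [torusEndo_apply, Finset.smul_sum, smul_smul]
    rw [Finset.sum_comm]
    simp only [← Finset.sum_smul]
    change ∑ j, (u ᵥ* M) j • t j = 0
    simp [huM]
  obtain ⟨t, ht⟩ := hM (Pi.single j ((1 / (2 * u j) : ℝ) : AddCircle (1 : ℝ)))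
  have hχt := hχ t
  rw [ht] at hχt
  have hujR : (u j : ℝ) ≠ 0 := Int.cast_ne_zero.mpr hj
  rw [Finset.sum_eq_single j (fun i _ hi => by simp [hi]) (by simp), Pi.single_eq_same,
    ← AddCircle.coe_zsmul, zsmul_eq_mul, show (u j : ℝ) * (1 / (2 * u j)) = 1 / 2 by field_simp]
    at hχt
  have h := AddCircle.norm_half_period_eq (1 : ℝ)
  rw [hχt, norm_zero] at h
  norm_num at h

end Matrix

theorem stmt14_general {n : ℕ} (A : Matrix (Fin n) (Fin n) ℤ)
    (f : Torus n ≃ₜ Torus n)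
    (hf : ∀ x : Fin n → ℝ,
      f (torusProj n x) = torusProj n ((A.map (Int.cast : ℤ → ℝ)).mulVec x))
    (τ : Torus n → Torus n)
    (hsurj : Function.Surjective τ)
    (B : Matrix (Fin n) (Fin n) ℤ) (c : Fin n → ℝ)
    (hwalters : ∀ x : Fin n → ℝ,
      τ (torusProj n x) = torusProj n ((B.map (Int.cast : ℤ → ℝ)).mulVec x + c)) :
    ∀ p q : Torus n, homoclinic f p q → τ p = τ q → p = q := by
  have hfA : ∀ t, f t = A.torusEndo t := (torusProj_surjective n).forall.2 fun x => by
    rw [hf, torusEndo_torusProj]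
  have hτB : ∀ t, τ t = B.torusEndo t + torusProj n c := (torusProj_surjective n).forall.2
    fun x => by rw [hwalters, torusEndo_torusProj, torusProj_add]
  have hdet : B.det ≠ 0 := det_ne_zero_of_surjective_torusEndo fun t => by
    obtain ⟨s, hs⟩ := hsurj (t + torusProj n c)
    exact ⟨s, add_right_cancel (by rw [← hτB, hs])⟩
  intro p q hpq hτpq
  have hBpq : B.torusEndo p = B.torusEndo q := add_right_cancel (by rw [← hτB, ← hτB, hτpq])
  refine eq_of_homoclinic_of_zsmul_sub_eq_zero f (by simp [hfA]) hpq hdet ?_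
  rw [← torusEndo_adjugate_apply, map_sub, hBpq, sub_self, map_zero]

theorem stmt14 {n : ℕ} (A : Matrix (Fin n) (Fin n) ℤ) (hA : IsUnit A.det)
    (hhyp : ∀ z : ℂ, (A.map (Int.cast : ℤ → ℂ)).charpoly.IsRoot z → ‖z‖ ≠ 1)
    (f : Torus n ≃ₜ Torus n)
    (hf : ∀ x : Fin n → ℝ,
      f (torusProj n x) = torusProj n ((A.map (Int.cast : ℤ → ℝ)).mulVec x))
    (τ : Torus n → Torus n) (hτc : Continuous τ) (hcomm : ∀ p, τ (f p) = f (τ p))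
    (hsurj : Function.Surjective τ)
    (B : Matrix (Fin n) (Fin n) ℤ) (c : Fin n → ℝ)
    (hwalters : ∀ x : Fin n → ℝ,
      τ (torusProj n x) = torusProj n ((B.map (Int.cast : ℤ → ℝ)).mulVec x + c)) :
    ∀ p q : Torus n, homoclinic f p q → τ p = τ q → p = q :=
  stmt14_general A f hf τ hsurj B c hwalters
end

section
/- The polynomial x⁴ − 2x³ + x² − 2x + 1 is irreducible over ℚ, and none of its complex roots is a root of unity; moreover it has exactly two roots of modulus 1 and two positive real roots λ₃, λ₄ with 0 < λ₃ < 1 < λ₄. -/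
/-!
Modulo 3, `chi` becomes the cyclotomic polynomial `Φ₅`, which is irreducible over `𝔽₃` because
3 has order 4 modulo 5; hence `chi` is irreducible over `ℚ`. All its roots are then Galois
conjugate, so if one were a root of unity all would be, which the real root `λ₄ > 1` forbids.
Being palindromic, `chi` factors as `(x² - (1 - √2)x + 1)(x² - (1 + √2)x + 1)`. Since
`|1 - √2| < 2`, the first factor has two complex-conjugate roots with product 1, hence of modulus 1;
a root `z` of modulus 1 of `x² - cx + 1` forces `|c| = |z² + 1| ≤ 2`, which excludes the second
factor. The real roots come from the sign changes `chi 0 = 1`, `chi 1 = -1`, `chi 2 = 1`.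
-/

open Polynomial ComplexConjugate

noncomputable def chi (R : Type*) [CommRing R] : R[X] := X ^ 4 - 2 * X ^ 3 + X ^ 2 - 2 * X + 1

section Chi

variable {R S : Type*} [CommRing R] [CommRing S]

theorem chi_monic [Nontrivial R] : (chi R).Monic := by
  unfold chi; monicity!

theorem map_chi (f : R →+* S) : (chi R).map f = chi S := by
  simp [chi]

theorem eval_chi (x : R) : (chi R).eval x = x ^ 4 - 2 * x ^ 3 + x ^ 2 - 2 * x + 1 := by
  simp [chi]

theorem aeval_chi [Algebra R S] (x : S) : aeval x (chi R) = (chi S).eval x := by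
  rw [aeval_def, eval₂_eq_eval_map, map_chi]

theorem eval_chi_eq_mul {s : R} (hs : s ^ 2 = 2) (x : R) :
    (chi R).eval x = (x ^ 2 - (1 - s) * x + 1) * (x ^ 2 - (1 + s) * x + 1) := by
  rw [eval_chi]
  linear_combination x ^ 2 * hs

end Chi

theorem chi_zmod_three : chi (ZMod 3) = cyclotomic 5 (ZMod 3) := by
  have : Fact (Nat.Prime 5) := ⟨by norm_num⟩
  have h3 : (3 : (ZMod 3)[X]) = 0 := by
    simpa using (CharP.cast_eq_zero (ZMod 3)[X] 3)
  rw [cyclotomic_prime, chi]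
  simp only [Finset.sum_range_succ, Finset.sum_range_zero, pow_zero, pow_one]
  linear_combination (-(X ^ 3 + X) : (ZMod 3)[X]) * h3

theorem irreducible_cyclotomic_five_zmod_three : Irreducible (cyclotomic 5 (ZMod 3)) := by
  refine ZMod.irreducible_of_dvd_cyclotomic_of_natDegree (by norm_num) dvd_rfl ?_
  rw [natDegree_cyclotomic, Nat.totient_prime (by norm_num), eq_comm, orderOf_eq_iff (by norm_num)]
  decide

theorem irreducible_chi_int : Irreducible (chi ℤ) := by
  refine chi_monic.irreducible_of_irreducible_map (Int.castRingHom (ZMod 3)) _ ?_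
  rw [map_chi, chi_zmod_three]
  exact irreducible_cyclotomic_five_zmod_three

theorem irreducible_chi_rat : Irreducible (chi ℚ) := by
  simpa only [map_chi] using
    (IsPrimitive.Int.irreducible_iff_irreducible_map_cast chi_monic.isPrimitive).mp
      irreducible_chi_int

theorem Irreducible.pow_eq_one_of_aeval_eq_zero {K L M : Type*} [Field K] [CommRing L]
    [Nontrivial L] [Algebra K L] [CommRing M] [Algebra K M] {p : K[X]} (hp : Irreducible p)
    {z : L} (hz : aeval z p = 0) {k : ℕ} (hzk : z ^ k = 1) {r : M} (hr : aeval r p = 0) :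
    r ^ k = 1 := by
  have hdvd : p ∣ X ^ k - 1 := by
    by_contra h
    refine (aeval_ne_zero_of_isCoprime (hp.coprime_iff_not_dvd.mpr h) z).elim (· hz) ?_
    simp [hzk]
  obtain ⟨q, hq⟩ := hdvd
  simpa [hr, sub_eq_zero] using congrArg (aeval r) hq

theorem abs_le_two_of_sq_sub_mul_add_one_eq_zero {c : ℝ} {z : ℂ} (hz : z ^ 2 - c * z + 1 = 0)
    (hn : ‖z‖ = 1) : |c| ≤ 2 :=
  calc |c| = ‖z ^ 2 + 1‖ := by
        rw [show z ^ 2 + 1 = c * z by linear_combination hz]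
        simp [hn]
    _ ≤ ‖z ^ 2‖ + ‖(1 : ℂ)‖ := norm_add_le _ _
    _ = 2 := by norm_num [hn]

theorem exists_sq_sub_mul_add_one_eq_mul_conj {c : ℝ} (hc : c ^ 2 < 4) :
    ∃ w : ℂ, ‖w‖ = 1 ∧ w ≠ conj w ∧ ∀ z : ℂ, z ^ 2 - c * z + 1 = (z - w) * (z - conj w) := by
  set t := √(4 - c ^ 2)
  have ht : t ^ 2 = 4 - c ^ 2 := Real.sq_sqrt (by linarith)
  have ht0 : 0 < t := Real.sqrt_pos.mpr (by linarith)
  set w : ℂ := ⟨c / 2, t / 2⟩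
  have hnormSq : Complex.normSq w = 1 := by
    rw [Complex.normSq_apply]; linear_combination ht / 4
  refine ⟨w, ?_, ?_, fun z => ?_⟩
  · rw [Complex.norm_def, hnormSq, Real.sqrt_one]
  · rw [Ne, eq_comm, Complex.conj_eq_iff_im]; exact (half_pos ht0).ne'
  · have hsum : w + conj w = c := by rw [Complex.add_conj, show w.re = c / 2 from rfl]; push_cast; ring
    have hprod : w * conj w = 1 := by rw [Complex.mul_conj, hnormSq]; simp
    linear_combination z * hsum - hprod

theorem ncard_setOf_isRoot_chi_norm_eq_one :
    {z : ℂ | (chi ℂ).IsRoot z ∧ ‖z‖ = 1}.ncard = 2 := by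
  have hs : (√2 : ℝ) ^ 2 = 2 := Real.sq_sqrt (by norm_num)
  have hs1 : 1 < √2 := by nlinarith [Real.sqrt_nonneg 2]
  have hsC : ((√2 : ℝ) : ℂ) ^ 2 = 2 := by exact_mod_cast hs
  obtain ⟨w, hw, hwc, hfac⟩ := exists_sq_sub_mul_add_one_eq_mul_conj (c := 1 - √2) (by nlinarith)
  have hroots : {z : ℂ | (chi ℂ).IsRoot z ∧ ‖z‖ = 1} = {w, conj w} := by
    ext z
    have hz := hfac z
    push_cast at hz
    simp only [Set.mem_ofPred_eq, Set.mem_insert_iff, Set.mem_singleton_iff, IsRoot,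
      eval_chi_eq_mul hsC, hz]
    constructor
    · rintro ⟨h, hn⟩
      rcases mul_eq_zero.mp h with h | h
      · rcases mul_eq_zero.mp h with h | h
        exacts [.inl (sub_eq_zero.mp h), .inr (sub_eq_zero.mp h)]
      · have := abs_le_two_of_sq_sub_mul_add_one_eq_zero (c := 1 + √2) (by push_cast; exact h) hn
        rw [abs_of_pos (by positivity)] at this
        linarith
    · rintro (rfl | rfl)
      exacts [⟨by ring, hw⟩, ⟨by ring, by rw [Complex.norm_conj, hw]⟩]
  rw [hroots, Set.ncard_pair hwc]

theorem exists_isRoot_chi_real :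
    ∃ l₃ l₄ : ℝ, (chi ℝ).IsRoot l₃ ∧ (chi ℝ).IsRoot l₄ ∧ 0 < l₃ ∧ l₃ < 1 ∧ 1 < l₄ := by
  have h0 : (chi ℝ).eval 0 = 1 := by norm_num [eval_chi]
  have h1 : (chi ℝ).eval 1 = -1 := by norm_num [eval_chi]
  have h2 : (chi ℝ).eval 2 = 1 := by norm_num [eval_chi]
  obtain ⟨l₃, ⟨hl₃0, hl₃1⟩, hl₃⟩ := intermediate_value_Ioo' zero_le_one
    (chi ℝ).continuousOn (show (0 : ℝ) ∈ Set.Ioo _ _ by rw [h0, h1]; norm_num)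
  obtain ⟨l₄, ⟨hl₄1, -⟩, hl₄⟩ := intermediate_value_Ioo one_le_two
    (chi ℝ).continuousOn (show (0 : ℝ) ∈ Set.Ioo _ _ by rw [h1, h2]; norm_num)
  exact ⟨l₃, l₄, hl₃, hl₄, hl₃0, hl₃1, hl₄1⟩

theorem stmt17 :
    Irreducible (X ^ 4 - 2 * X ^ 3 + X ^ 2 - 2 * X + 1 : ℚ[X]) ∧
    (∀ z : ℂ, (X ^ 4 - 2 * X ^ 3 + X ^ 2 - 2 * X + 1 : ℂ[X]).IsRoot z →
      ∀ k : ℕ, 1 ≤ k → z ^ k ≠ 1) ∧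
    {z : ℂ | (X ^ 4 - 2 * X ^ 3 + X ^ 2 - 2 * X + 1 : ℂ[X]).IsRoot z ∧
      ‖z‖ = 1}.ncard = 2 ∧
    (∃ l₃ l₄ : ℝ, (X ^ 4 - 2 * X ^ 3 + X ^ 2 - 2 * X + 1 : ℝ[X]).IsRoot l₃ ∧
      (X ^ 4 - 2 * X ^ 3 + X ^ 2 - 2 * X + 1 : ℝ[X]).IsRoot l₄ ∧
      0 < l₃ ∧ l₃ < 1 ∧ 1 < l₄) := by
  obtain ⟨l₃, l₄, hl₃, hl₄, hl₃0, hl₃1, hl₄1⟩ := exists_isRoot_chi_real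
  refine ⟨irreducible_chi_rat, fun z hz k hk hzk => ?_, ncard_setOf_isRoot_chi_norm_eq_one,
    l₃, l₄, hl₃, hl₄, hl₃0, hl₃1, hl₄1⟩
  have := irreducible_chi_rat.pow_eq_one_of_aeval_eq_zero (by rwa [aeval_chi]) hzk
    (r := l₄) (by rwa [aeval_chi])
  exact (one_lt_pow₀ hl₄1 (by omega)).ne' this
end
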